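/- Let r, s be positive integers with s ≥ r, let M₀, M₁ be complex r×s matrices satisfying M₀†M₀ + M₁†M₁ = I_s and M₀M₀† + M₁M₁† ≥ I_r (in the positive semidefinite order), and let p₀, p₁ > 0 be real numbers. Then the r×r matrix X = p₀M₀M₀† + p₁M₁M₁† is positive definite (hence invertible), and the s×s matrix R = p₀ M₀† X^{−1} M₀ + p₁ M₁† X^{−1} M₁ has operator norm ‖R‖ ≤ 1. -/

import Mathlib

/-!
View `M₀, M₁` as operators `A₀, A₁`, put `X = p₀ A₀ A₀† + p₁ A₁ A₁†` and, for a vector `u`,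
`cᵢ = X⁻¹ Aᵢ u`. Then `R u = p₀ A₀† c₀ + p₁ A₁† c₁` and
`re ⟪u, R u⟫ = p₀ re ⟪X c₀, c₀⟫ + p₁ re ⟪X c₁, c₁⟫`, with `re ⟪X c, c⟫ = p₀ ‖A₀† c‖² + p₁ ‖A₁† c‖²`.
Since `A₀† A₀ + A₁† A₁ = 1`, the map `(x, y) ↦ A₀† x + A₁† y` is a contraction; together with
`‖x‖² ≤ ‖A₀† x‖² + ‖A₁† x‖²` this bounds the cross term `2 re ⟪A₀† c₀, A₁† c₁⟫` of `‖R u‖²` by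
`‖A₁† c₀‖² + ‖A₀† c₁‖²`, whence `‖R u‖² ≤ re ⟪u, R u⟫ ≤ ‖u‖ ‖R u‖`.
Positive definiteness of `X` comes from `X ≥ min p₀ p₁ • (M₀ M₀† + M₁ M₁†) ≥ min p₀ p₁ • 1`.
-/

open scoped BigOperators ComplexOrder
open Matrix

noncomputable section

/-- The ℓ²-operator norm of a matrix (largest singular value). -/
def opNorm {I : Type} [Fintype I] [DecidableEq I] (M : Matrix I I ℂ) : ℝ :=
  ‖Matrix.toEuclideanCLM (𝕜 := ℂ) M‖

open scoped InnerProductSpace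
open RCLike

section InnerProduct

variable {𝕜 E F : Type*} [RCLike 𝕜] [NormedAddCommGroup E] [InnerProductSpace 𝕜 E]

lemma two_mul_re_inner_le_norm_sq_add_norm_sq (x y : E) :
    2 * re ⟪x, y⟫_𝕜 ≤ ‖x‖ ^ 2 + ‖y‖ ^ 2 := by
  linarith [norm_sub_sq (𝕜 := 𝕜) x y, sq_nonneg ‖x - y‖]

variable [FiniteDimensional 𝕜 E] [NormedAddCommGroup F] [InnerProductSpace 𝕜 F]
  [FiniteDimensional 𝕜 F]

namespace LinearMap

lemma re_inner_adjoint_comp_self_apply (A : E →ₗ[𝕜] F) (u : E) :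
    re ⟪(adjoint A ∘ₗ A) u, u⟫_𝕜 = ‖A u‖ ^ 2 := by
  rw [comp_apply, adjoint_inner_left, inner_self_eq_norm_sq]

lemma re_inner_comp_adjoint_apply (A : E →ₗ[𝕜] F) (x : F) :
    re ⟪(A ∘ₗ adjoint A) x, x⟫_𝕜 = ‖adjoint A x‖ ^ 2 := by
  rw [comp_apply, ← adjoint_inner_right, inner_self_eq_norm_sq]

lemma re_inner_smul_comp_adjoint_add_smul_comp_adjoint_apply (A₀ A₁ : E →ₗ[𝕜] F)
    (p₀ p₁ : ℝ) (x : F) :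
    re ⟪((p₀ : 𝕜) • A₀ ∘ₗ adjoint A₀ + (p₁ : 𝕜) • A₁ ∘ₗ adjoint A₁) x, x⟫_𝕜 =
      p₀ * ‖adjoint A₀ x‖ ^ 2 + p₁ * ‖adjoint A₁ x‖ ^ 2 := by
  rw [add_apply, smul_apply, smul_apply, inner_add_left, inner_smul_left, inner_smul_left,
    conj_ofReal, conj_ofReal, map_add, re_ofReal_mul, re_ofReal_mul, re_inner_comp_adjoint_apply,
    re_inner_comp_adjoint_apply]

variable {A₀ A₁ : E →ₗ[𝕜] F}

lemma norm_sq_add_norm_sq_eq_of_adjoint_comp_add (h : adjoint A₀ ∘ₗ A₀ + adjoint A₁ ∘ₗ A₁ = 1)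
    (u : E) : ‖A₀ u‖ ^ 2 + ‖A₁ u‖ ^ 2 = ‖u‖ ^ 2 := by
  have := congrArg (fun T : E →ₗ[𝕜] E ↦ re ⟪T u, u⟫_𝕜) h
  simpa only [add_apply, inner_add_left, map_add, re_inner_adjoint_comp_self_apply,
    Module.End.one_apply, inner_self_eq_norm_sq] using this

lemma norm_sq_le_of_one_le_comp_adjoint_add (h : 1 ≤ A₀ ∘ₗ adjoint A₀ + A₁ ∘ₗ adjoint A₁)
    (x : F) : ‖x‖ ^ 2 ≤ ‖adjoint A₀ x‖ ^ 2 + ‖adjoint A₁ x‖ ^ 2 := by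
  have := ((le_def _ _).mp h).re_inner_nonneg_left x
  simp only [sub_apply, add_apply, inner_sub_left, inner_add_left, map_sub, map_add,
    re_inner_comp_adjoint_apply, Module.End.one_apply, inner_self_eq_norm_sq] at this
  linarith

lemma norm_sq_adjoint_add_adjoint_le (h : adjoint A₀ ∘ₗ A₀ + adjoint A₁ ∘ₗ A₁ = 1) (x y : F) :
    ‖adjoint A₀ x + adjoint A₁ y‖ ^ 2 ≤ ‖x‖ ^ 2 + ‖y‖ ^ 2 := by
  set z := adjoint A₀ x + adjoint A₁ y
  have hz : ‖z‖ ^ 2 = re ⟪A₀ z, x⟫_𝕜 + re ⟪A₁ z, y⟫_𝕜 := by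
    rw [← inner_self_eq_norm_sq (𝕜 := 𝕜), ← map_add, ← adjoint_inner_right,
      ← adjoint_inner_right, ← inner_add_right]
  linarith [norm_sq_add_norm_sq_eq_of_adjoint_comp_add h z,
    two_mul_re_inner_le_norm_sq_add_norm_sq (𝕜 := 𝕜) (A₀ z) x,
    two_mul_re_inner_le_norm_sq_add_norm_sq (𝕜 := 𝕜) (A₁ z) y]

lemma two_mul_re_inner_adjoint_adjoint_le (h₁ : adjoint A₀ ∘ₗ A₀ + adjoint A₁ ∘ₗ A₁ = 1)
    (h₂ : 1 ≤ A₀ ∘ₗ adjoint A₀ + A₁ ∘ₗ adjoint A₁) (x y : F) :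
    2 * re ⟪adjoint A₀ x, adjoint A₁ y⟫_𝕜 ≤ ‖adjoint A₁ x‖ ^ 2 + ‖adjoint A₀ y‖ ^ 2 := by
  linarith [norm_add_sq (𝕜 := 𝕜) (adjoint A₀ x) (adjoint A₁ y),
    norm_sq_adjoint_add_adjoint_le h₁ x y, norm_sq_le_of_one_le_comp_adjoint_add h₂ x,
    norm_sq_le_of_one_le_comp_adjoint_add h₂ y]

lemma norm_sq_smul_adjoint_add_smul_adjoint_le (h₁ : adjoint A₀ ∘ₗ A₀ + adjoint A₁ ∘ₗ A₁ = 1)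
    (h₂ : 1 ≤ A₀ ∘ₗ adjoint A₀ + A₁ ∘ₗ adjoint A₁) {p₀ p₁ : ℝ} (hp₀ : 0 ≤ p₀) (hp₁ : 0 ≤ p₁)
    (x y : F) :
    ‖(p₀ : 𝕜) • adjoint A₀ x + (p₁ : 𝕜) • adjoint A₁ y‖ ^ 2 ≤
      p₀ * (p₀ * ‖adjoint A₀ x‖ ^ 2 + p₁ * ‖adjoint A₁ x‖ ^ 2) +
        p₁ * (p₀ * ‖adjoint A₀ y‖ ^ 2 + p₁ * ‖adjoint A₁ y‖ ^ 2) := by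
  rw [norm_add_sq (𝕜 := 𝕜), norm_smul, norm_smul, inner_smul_left, inner_smul_right, conj_ofReal,
    ← mul_assoc, ← ofReal_mul, re_ofReal_mul, norm_ofReal, norm_ofReal, abs_of_nonneg hp₀,
    abs_of_nonneg hp₁]
  nlinarith [mul_le_mul_of_nonneg_left (two_mul_re_inner_adjoint_adjoint_le h₁ h₂ x y)
    (mul_nonneg hp₀ hp₁)]

theorem norm_smul_adjoint_comp_comp_add_apply_le
    (h₁ : adjoint A₀ ∘ₗ A₀ + adjoint A₁ ∘ₗ A₁ = 1)
    (h₂ : 1 ≤ A₀ ∘ₗ adjoint A₀ + A₁ ∘ₗ adjoint A₁) {p₀ p₁ : ℝ} (hp₀ : 0 ≤ p₀) (hp₁ : 0 ≤ p₁)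
    {Y : F →ₗ[𝕜] F} (hY : ((p₀ : 𝕜) • A₀ ∘ₗ adjoint A₀ + (p₁ : 𝕜) • A₁ ∘ₗ adjoint A₁) ∘ₗ Y = 1)
    (u : E) :
    ‖((p₀ : 𝕜) • adjoint A₀ ∘ₗ Y ∘ₗ A₀ + (p₁ : 𝕜) • adjoint A₁ ∘ₗ Y ∘ₗ A₁) u‖ ≤ ‖u‖ := by
  set X := (p₀ : 𝕜) • A₀ ∘ₗ adjoint A₀ + (p₁ : 𝕜) • A₁ ∘ₗ adjoint A₁
  set c₀ := Y (A₀ u)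
  set c₁ := Y (A₁ u)
  set w := (p₀ : 𝕜) • adjoint A₀ c₀ + (p₁ : 𝕜) • adjoint A₁ c₁
  have hXY (v : F) : X (Y v) = v := LinearMap.congr_fun hY v
  have huw : re ⟪u, w⟫_𝕜 = p₀ * re ⟪X c₀, c₀⟫_𝕜 + p₁ * re ⟪X c₁, c₁⟫_𝕜 := by
    rw [hXY, hXY, inner_add_right, inner_smul_right, inner_smul_right, adjoint_inner_right,
      adjoint_inner_right, map_add, re_ofReal_mul, re_ofReal_mul]
  have hw_sq : ‖w‖ ^ 2 ≤ re ⟪u, w⟫_𝕜 := by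
    rw [huw, re_inner_smul_comp_adjoint_add_smul_comp_adjoint_apply,
      re_inner_smul_comp_adjoint_add_smul_comp_adjoint_apply]
    exact norm_sq_smul_adjoint_add_smul_adjoint_le h₁ h₂ hp₀ hp₁ c₀ c₁
  show ‖w‖ ≤ ‖u‖
  nlinarith [re_inner_le_norm (𝕜 := 𝕜) u w, norm_nonneg u, norm_nonneg w]

end LinearMap

end InnerProduct

namespace Matrix

variable {m n 𝕜 : Type*} [RCLike 𝕜]

lemma PosSemidef.posDef_smul_add_smul [DecidableEq n] {A B : Matrix n n 𝕜} (hA : A.PosSemidef)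
    (hB : B.PosSemidef) (hAB : (A + B - 1).PosSemidef) {a b : ℝ} (ha : 0 < a) (hb : 0 < b) :
    ((a : 𝕜) • A + (b : 𝕜) • B).PosDef := by
  set c := min a b
  have hc : 0 < c := lt_min ha hb
  have hsplit : (a : 𝕜) • A + (b : 𝕜) • B =
      ((a - c) • A + (b - c) • B + c • (A + B - 1)) + c • (1 : Matrix n n 𝕜) := by
    simp only [real_smul_eq_coe_smul (K := 𝕜), ofReal_sub]
    module
  rw [hsplit]
  exact PosDef.posSemidef_add (((hA.smul (sub_nonneg.mpr (min_le_left a b))).add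
    (hB.smul (sub_nonneg.mpr (min_le_right a b)))).add (hAB.smul hc.le)) (PosDef.one.smul hc)

variable [Fintype m] [DecidableEq m] [Fintype n] [DecidableEq n]

theorem norm_toEuclideanCLM_smul_conjTranspose_mul_mul_add_le_one {M₀ M₁ : Matrix m n 𝕜}
    (h₁ : M₀ᴴ * M₀ + M₁ᴴ * M₁ = 1) (h₂ : (M₀ * M₀ᴴ + M₁ * M₁ᴴ - 1).PosSemidef)
    {p₀ p₁ : ℝ} (hp₀ : 0 ≤ p₀) (hp₁ : 0 ≤ p₁) {Y : Matrix m m 𝕜}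
    (hY : ((p₀ : 𝕜) • (M₀ * M₀ᴴ) + (p₁ : 𝕜) • (M₁ * M₁ᴴ)) * Y = 1) :
    ‖toEuclideanCLM (𝕜 := 𝕜) ((p₀ : 𝕜) • (M₀ᴴ * Y * M₀) + (p₁ : 𝕜) • (M₁ᴴ * Y * M₁))‖ ≤ 1 := by
  refine ContinuousLinearMap.opNorm_le_bound _ zero_le_one fun u ↦ ?_
  have h₁' := congrArg toEuclideanLin h₁
  have h₂' := isPositive_toEuclideanLin_iff.mpr h₂
  have hY' := congrArg toEuclideanLin hY
  simp only [map_add, map_sub, map_smul, toLpLin_mul_same, toLpLin_one,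
    toEuclideanLin_conjTranspose_eq_adjoint, ← Module.End.one_eq_id] at h₁' h₂' hY'
  have hR : toEuclideanLin ((p₀ : 𝕜) • (M₀ᴴ * Y * M₀) + (p₁ : 𝕜) • (M₁ᴴ * Y * M₁)) =
      (p₀ : 𝕜) • (toEuclideanLin M₀).adjoint ∘ₗ toEuclideanLin Y ∘ₗ toEuclideanLin M₀ +
        (p₁ : 𝕜) • (toEuclideanLin M₁).adjoint ∘ₗ toEuclideanLin Y ∘ₗ toEuclideanLin M₁ := by
    simp only [map_add, map_smul, toLpLin_mul_same, toEuclideanLin_conjTranspose_eq_adjoint,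
      LinearMap.comp_assoc]
  rw [one_mul]
  exact (congrArg norm (LinearMap.congr_fun hR u)).trans_le
    (LinearMap.norm_smul_adjoint_comp_comp_add_apply_le h₁' h₂' hp₀ hp₁ hY' u)

end Matrix

theorem matrix_R_norm_bound (r s : ℕ)
    (M₀ M₁ : Matrix (Fin r) (Fin s) ℂ)
    (h1 : M₀ᴴ * M₀ + M₁ᴴ * M₁ = 1)
    (h2 : (M₀ * M₀ᴴ + M₁ * M₁ᴴ - 1).PosSemidef)
    (p₀ p₁ : ℝ) (hp₀ : 0 < p₀) (hp₁ : 0 < p₁)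
    (Xm : Matrix (Fin r) (Fin r) ℂ)
    (hX : Xm = (p₀ : ℂ) • (M₀ * M₀ᴴ) + (p₁ : ℂ) • (M₁ * M₁ᴴ)) :
    Xm.PosDef ∧ IsUnit Xm ∧
      opNorm ((p₀ : ℂ) • (M₀ᴴ * Xm⁻¹ * M₀) + (p₁ : ℂ) • (M₁ᴴ * Xm⁻¹ * M₁)) ≤ 1 := by
  have hXm : Xm.PosDef := hX ▸ (posSemidef_self_mul_conjTranspose M₀).posDef_smul_add_smul
    (posSemidef_self_mul_conjTranspose M₁) h2 hp₀ hp₁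
  have hXY : ((p₀ : ℂ) • (M₀ * M₀ᴴ) + (p₁ : ℂ) • (M₁ * M₁ᴴ)) * Xm⁻¹ = 1 := by
    rw [← hX]
    exact mul_nonsing_inv Xm ((isUnit_iff_isUnit_det Xm).mp hXm.isUnit)
  exact ⟨hXm, hXm.isUnit,
    norm_toEuclideanCLM_smul_conjTranspose_mul_mul_add_le_one h1 h2 hp₀.le hp₁.le hXY⟩
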